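/- (ERM fails for bounded-range SCO in dimension 2) Let K = B₂² be the closed unit disk, let m ≥ 2 be an integer, let W_m = {(sin(2πi/m), cos(2πi/m)) : i ∈ [m]}, let α = 2/m², let φ_α(a) = 0 for a ≤ 1 - α and φ_α(a) = (a - 1 + α)/α for a > 1 - α, and for V ⊆ W_m define f_V(x) = Σ_{w ∈ V} φ_α(⟨w, x⟩). Let D_m be the uniform distribution over {f_V : V ⊆ W_m}, F_D(x) = E_V[f_V(x)], F* = min_{x ∈ K} F_D(x), and F_S(x) = (1/n) Σᵢ f_{Vᵢ}(x) for a sample S = (V₁,...,Vₙ). Then for every n ≤ log₂ m, with probability greater than 1/2 over S drawn as n i.i.d. uniform subsets of W_m, there exists x̂ ∈ K with F_S(x̂) = min_{x ∈ K} F_S(x) and F_D(x̂) - F* ≥ 1/2. -/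

import Mathlib

open scoped RealInnerProductSpace Real BigOperators
attribute [local instance] Classical.propDecidable

/-- The point `w^i = (sin(2πi/m), cos(2πi/m))` on the unit circle in `ℝ²`. -/
noncomputable def circlePoint (m i : ℕ) : EuclideanSpace ℝ (Fin 2) :=
  !₂[Real.sin (2 * π * i / m), Real.cos (2 * π * i / m)]

/-- The set `W_m = {w^1, ..., w^m}`. -/
noncomputable def Wm (m : ℕ) : Finset (EuclideanSpace ℝ (Fin 2)) :=
  (Finset.Icc 1 m).image (circlePoint m)

/-- `φ_α(a) = 0` for `a ≤ 1 - α`, and `φ_α(a) = (a - 1 + α)/α` for `a > 1 - α`. -/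
noncomputable def phi (a' a : ℝ) : ℝ := if a ≤ 1 - a' then 0 else (a - 1 + a') / a'

/-- `f_V(x) = Σ_{w ∈ V} φ_α(⟨w, x⟩)` with `α = 2/m²`. -/
noncomputable def fV (m : ℕ) (V : Finset (EuclideanSpace ℝ (Fin 2)))
    (x : EuclideanSpace ℝ (Fin 2)) : ℝ :=
  ∑ w ∈ V, phi (2 / (m : ℝ) ^ 2) ⟪w, x⟫

section Aux

open Real Finset

theorem cos_angle_bound (m d : ℕ) (hm : 2 ≤ m) (h1 : 1 ≤ d) (h2 : d < m) :
    Real.cos (2*π*d/m) ≤ 1 - 2/(m:ℝ)^2 := by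
  have hm0 : (0:ℝ) < m := by positivity
  have hπ := Real.pi_pos
  set e := min d (m - d) with he
  have he1 : 1 ≤ e := le_min h1 (by omega)
  have he2 : 2 * e ≤ m := by omega
  have hcos : Real.cos (2*π*d/m) = Real.cos (2*π*e/m) := by
    rcases min_cases d (m - d) with ⟨h, _⟩ | ⟨h, _⟩
    · rw [he, h]
    · rw [he, h]
      have : (2*π*d/m : ℝ) = 2*π - 2*π*(m-d : ℕ)/m := by
        have : ((m - d : ℕ) : ℝ) = (m : ℝ) - d := by
          rw [Nat.cast_sub (by omega)]
        rw [this]; field_simp; ring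
      rw [this, Real.cos_two_pi_sub]
  rw [hcos]
  have habs : |2*π*e/m| ≤ π := by
    rw [abs_of_nonneg (by positivity)]
    rw [div_le_iff₀ hm0]
    have : (2:ℝ) * e ≤ m := by exact_mod_cast he2
    nlinarith
  have hb := Real.cos_le_one_sub_mul_cos_sq habs
  have he1' : (1:ℝ) ≤ e := by exact_mod_cast he1
  have h8 : 2/π^2 * (2*π*e/m)^2 = 8*e^2/m^2 := by
    field_simp; ring
  rw [h8] at hb
  have h9 : (2:ℝ)/m^2 ≤ 8*e^2/m^2 :=
    div_le_div_of_nonneg_right (by nlinarith) (by positivity) |>.trans_eq rfl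
  linarith

theorem circlePoint_inner (m i j : ℕ) :
    ⟪circlePoint m i, circlePoint m j⟫ = Real.cos (2*π*i/m - 2*π*j/m) := by
  simp [circlePoint, PiLp.inner_apply, Fin.sum_univ_two, RCLike.inner_apply, Real.cos_sub]
  ring

theorem norm_circlePoint (m i : ℕ) : ‖circlePoint m i‖ = 1 := by
  rw [EuclideanSpace.norm_eq]
  simp [circlePoint, Fin.sum_univ_two]

theorem circlePoint_injOn (m : ℕ) (hm : 2 ≤ m) :
    Set.InjOn (circlePoint m) (Finset.Icc 1 m) := by
  intro i hi j hj hij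
  simp only [Finset.coe_Icc, Set.mem_Icc] at hi hj
  have hm0 : (0:ℝ) < m := by positivity
  have hπ := Real.pi_pos
  have hs : Real.sin (2*π*i/m) = Real.sin (2*π*j/m) := by
    have := congrArg (fun v : EuclideanSpace ℝ (Fin 2) => v 0) hij
    simpa [circlePoint] using this
  have hc : Real.cos (2*π*i/m) = Real.cos (2*π*j/m) := by
    have := congrArg (fun v : EuclideanSpace ℝ (Fin 2) => v 1) hij
    simpa [circlePoint] using this
  have h1 : Real.cos (2*π*i/m - 2*π*j/m) = 1 := by
    rw [Real.cos_sub, hs, hc]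
    rw [← Real.sin_sq_add_cos_sq (2*π*j/m)]; ring
  have hilt : (i:ℝ) ≤ m := by exact_mod_cast hi.2
  have hjlt : (j:ℝ) ≤ m := by exact_mod_cast hj.2
  have hipos : (1:ℝ) ≤ i := by exact_mod_cast hi.1
  have hjpos : (1:ℝ) ≤ j := by exact_mod_cast hj.1
  have h2 : 2*π*i/m - 2*π*j/m = 0 := by
    refine (Real.cos_eq_one_iff_of_lt_of_lt ?_ ?_).mp h1
    · rw [neg_lt, neg_sub]
      rw [div_sub_div_same, div_lt_iff₀ hm0]
      nlinarith
    · rw [div_sub_div_same, div_lt_iff₀ hm0]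
      nlinarith
  have : (i:ℝ) = j := by
    rw [div_sub_div_same, div_eq_zero_iff] at h2
    rcases h2 with h | h
    · nlinarith [sub_eq_zero.mp (by nlinarith : 2*π*(i:ℝ) - 2*π*j = 0)]
    · nlinarith
  exact_mod_cast this

theorem inner_le_of_ne (m : ℕ) (hm : 2 ≤ m) {w w' : EuclideanSpace ℝ (Fin 2)}
    (hw : w ∈ Wm m) (hw' : w' ∈ Wm m) (hne : w ≠ w') :
    ⟪w, w'⟫ ≤ 1 - 2/(m:ℝ)^2 := by
  obtain ⟨i, hi, rfl⟩ := Finset.mem_image.mp hw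
  obtain ⟨j, hj, rfl⟩ := Finset.mem_image.mp hw'
  rw [Finset.mem_Icc] at hi hj
  have hij : i ≠ j := fun h => hne (by rw [h])
  rw [circlePoint_inner]
  have key : ∀ a b : ℕ, 1 ≤ a → a ≤ m → 1 ≤ b → b ≤ m → b < a →
      Real.cos (2*π*a/m - 2*π*b/m) ≤ 1 - 2/(m:ℝ)^2 := by
    intro a b ha1 ham hb1 hbm hba
    have : (2*π*a/m - 2*π*b/m : ℝ) = 2*π*((a-b:ℕ))/m := by
      rw [Nat.cast_sub (by omega)]; ring
    rw [this]
    exact cos_angle_bound m (a-b) hm (by omega) (by omega)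
  rcases lt_or_gt_of_ne hij with h | h
  · rw [← Real.cos_neg, neg_sub]
    exact key j i hj.1 hj.2 hi.1 hi.2 h
  · exact key i j hi.1 hi.2 hj.1 hj.2 h

theorem phi_nonneg {a' a : ℝ} (h : 0 < a') : 0 ≤ phi a' a := by
  unfold phi; split
  · exact le_refl 0
  · next hle => exact div_nonneg (by push_neg at hle; linarith) h.le

theorem phi_one {a' : ℝ} (h : 0 < a') : phi a' 1 = 1 := by
  unfold phi
  rw [if_neg (by linarith)]
  field_simp
  ring

theorem phi_zero {a' a : ℝ} (h : a ≤ 1 - a') : phi a' a = 0 := if_pos h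

theorem fV_nonneg (m : ℕ) (hm : 2 ≤ m) (V : Finset (EuclideanSpace ℝ (Fin 2)))
    (x : EuclideanSpace ℝ (Fin 2)) : 0 ≤ fV m V x := by
  have hm0 : (0:ℝ) < m := by positivity
  exact Finset.sum_nonneg fun w _ => phi_nonneg (by positivity)

theorem inner_self_Wm {m : ℕ} {w : EuclideanSpace ℝ (Fin 2)} (hw : w ∈ Wm m) :
    ⟪w, w⟫ = 1 := by
  obtain ⟨i, _, rfl⟩ := Finset.mem_image.mp hw
  rw [circlePoint_inner, sub_self, Real.cos_zero]

theorem fV_eq_ite (m : ℕ) (hm : 2 ≤ m) {V : Finset (EuclideanSpace ℝ (Fin 2))}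
    {w : EuclideanSpace ℝ (Fin 2)} (hV : V ⊆ Wm m) (hw : w ∈ Wm m) :
    fV m V w = if w ∈ V then 1 else 0 := by
  have hm0 : (0:ℝ) < m := by positivity
  unfold fV
  have hrw : ∀ w' ∈ V, phi (2/(m:ℝ)^2) ⟪w', w⟫ = if w' = w then 1 else 0 := by
    intro w' hw'
    by_cases h : w' = w
    · subst h
      rw [if_pos rfl, inner_self_Wm (hV hw'), phi_one (by positivity)]
    · rw [if_neg h, phi_zero (inner_le_of_ne m hm (hV hw') hw h)]
  rw [Finset.sum_congr rfl hrw, Finset.sum_ite_eq' V w (fun _ => (1:ℝ))]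

theorem fV_zero (m : ℕ) (hm : 2 ≤ m) (V : Finset (EuclideanSpace ℝ (Fin 2))) :
    fV m V 0 = 0 := by
  have hm2 : (4:ℝ) ≤ (m:ℝ)^2 := by
    have : (2:ℝ) ≤ m := by exact_mod_cast hm
    nlinarith
  refine Finset.sum_eq_zero fun w _ => ?_
  rw [inner_zero_right]
  refine phi_zero ?_
  have hm0 : (0:ℝ) < (m:ℝ)^2 := by positivity
  have : 2 / (m:ℝ)^2 ≤ 1/2 := by
    rw [div_le_div_iff₀ hm0 (by norm_num)]; linarith
  linarith

theorem cover_count {α : Type*} [DecidableEq α] (n : ℕ) (S : Finset α) :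
    ((Fintype.piFinset fun _ : Fin n => S.powerset).filter
      (fun Vs => ∀ w ∈ S, ∃ i, w ∈ Vs i)).card = (2^n - 1)^S.card := by
  have hT : (Fintype.piFinset fun _ : {x // x ∈ S} =>
      ((Finset.univ : Finset (Fin n)).powerset.erase ∅)).card = (2^n - 1)^S.card := by
    rw [Fintype.card_piFinset]
    rw [Finset.prod_const]
    rw [Finset.card_erase_of_mem (Finset.empty_mem_powerset _), Finset.card_powerset,
      Finset.card_univ, Fintype.card_fin, Finset.card_univ, Fintype.card_coe]
  rw [← hT]
  refine Finset.card_bij'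
    (fun Vs _ => fun w : {x // x ∈ S} => Finset.univ.filter (fun i => (w : α) ∈ Vs i))
    (fun b _ => fun i => (S.attach.filter (fun w => i ∈ b w)).image Subtype.val)
    ?_ ?_ ?_ ?_
  · intro Vs hVs
    rw [Finset.mem_filter] at hVs
    obtain ⟨hVs, hcov⟩ := hVs
    rw [Fintype.mem_piFinset]
    intro w
    rw [Finset.mem_erase]
    constructor
    · obtain ⟨i, hi⟩ := hcov w w.2
      exact Finset.ne_empty_of_mem (Finset.mem_filter.mpr ⟨Finset.mem_univ i, hi⟩)
    · exact Finset.mem_powerset.mpr (Finset.filter_subset _ _)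
  · intro b hb
    rw [Fintype.mem_piFinset] at hb
    rw [Finset.mem_filter]
    constructor
    · rw [Fintype.mem_piFinset]
      intro i
      apply Finset.mem_powerset.mpr
      intro x hx
      obtain ⟨w, _, rfl⟩ := Finset.mem_image.mp hx
      exact w.2
    · intro w hw
      have := hb ⟨w, hw⟩
      rw [Finset.mem_erase] at this
      obtain ⟨i, hi⟩ := Finset.nonempty_iff_ne_empty.mpr this.1
      refine ⟨i, Finset.mem_image.mpr ⟨⟨w, hw⟩, ?_, rfl⟩⟩
      exact Finset.mem_filter.mpr ⟨Finset.mem_attach _ _, hi⟩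
  · intro Vs hVs
    rw [Finset.mem_filter, Fintype.mem_piFinset] at hVs
    funext i
    ext x
    simp only [Finset.mem_image, Finset.mem_filter, Finset.mem_attach, true_and,
      Finset.mem_univ, Subtype.exists]
    constructor
    · rintro ⟨a, ha, hmem, rfl⟩
      exact hmem
    · intro hx
      exact ⟨x, Finset.mem_powerset.mp (hVs.1 i) hx, hx, rfl⟩
  · intro b hb
    funext w
    ext i
    simp only [Finset.mem_filter, Finset.mem_univ, true_and, Finset.mem_image,
      Finset.mem_attach, Subtype.exists]
    constructor
    · rintro ⟨a, ha, hia, hval⟩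
      have : (⟨a, ha⟩ : {x // x ∈ S}) = w := Subtype.ext hval
      rwa [this] at hia
    · intro hi
      exact ⟨w.1, w.2, by simpa using hi, rfl⟩

end Aux

/-- ERM fails for bounded-range SCO in dimension 2: Let `K = B₂²` be the
closed unit disk, `m ≥ 2`, and let `D_m` be the uniform distribution over
`{f_V : V ⊆ W_m}`, with `F_D(x) = E_V[f_V(x)]`, `F* = min_K F_D` and
`F_S(x) = (1/n) Σᵢ f_{Vᵢ}(x)`. For every `n ≤ log₂ m`, with probability `> 1/2` over `S`
drawn as `n` i.i.d. uniform subsets of `W_m`, there exists `xhat ∈ K` with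
`F_S(xhat) = min_K F_S` and `F_D(xhat) - F* ≥ 1/2`. -/
theorem erm_fails_bounded_range_dim2 (m n : ℕ) (hm : 2 ≤ m)
    (hn : (n : ℝ) ≤ Real.logb 2 m)
    (K : Set (EuclideanSpace ℝ (Fin 2))) (hK : K = Metric.closedBall 0 1)
    (FD : EuclideanSpace ℝ (Fin 2) → ℝ)
    (hFD : FD = fun x => (∑ V ∈ (Wm m).powerset, fV m V x) / ((Wm m).powerset.card : ℝ))
    (Fstar : ℝ) (hFstar : Fstar = sInf (FD '' K))
    (FS : (Fin n → Finset (EuclideanSpace ℝ (Fin 2))) → EuclideanSpace ℝ (Fin 2) → ℝ)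
    (hFS : FS = fun Vs x => (∑ i : Fin n, fV m (Vs i) x) / (n : ℝ)) :
    (((Fintype.piFinset fun _ : Fin n => (Wm m).powerset).filter
        (fun Vs => ∃ xhat ∈ K, (∀ y ∈ K, FS Vs xhat ≤ FS Vs y) ∧
          FD xhat - Fstar ≥ 1/2)).card : ℝ) /
      ((Fintype.piFinset fun _ : Fin n => (Wm m).powerset).card : ℝ) > 1/2 := by
  have hm0 : (0:ℝ) < m := by positivity
  -- basic cardinalities
  have hWcard : (Wm m).card = m := by
    rw [Wm, Finset.card_image_of_injOn (circlePoint_injOn m hm), Nat.card_Icc]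
    omega
  have hPow : (Wm m).powerset.card = 2^m := by
    rw [Finset.card_powerset, hWcard]
  -- membership facts
  have hWK : ∀ w ∈ Wm m, w ∈ K := by
    intro w hw
    obtain ⟨i, _, rfl⟩ := Finset.mem_image.mp hw
    rw [hK, Metric.mem_closedBall, dist_zero_right, norm_circlePoint]
  have h0K : (0 : EuclideanSpace ℝ (Fin 2)) ∈ K := by
    rw [hK]; simp
  -- FD is nonneg, FD 0 = 0, hence Fstar = 0
  have hFDnn : ∀ x, 0 ≤ FD x := by
    intro x
    rw [hFD]
    exact div_nonneg (Finset.sum_nonneg fun V _ => fV_nonneg m hm V x) (Nat.cast_nonneg _)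
  have hFD0 : FD 0 = 0 := by
    rw [hFD]
    simp only
    rw [Finset.sum_eq_zero fun V _ => fV_zero m hm V, zero_div]
  have hFstar0 : Fstar = 0 := by
    rw [hFstar]
    apply le_antisymm
    · exact csInf_le ⟨0, by rintro y ⟨x, _, rfl⟩; exact hFDnn x⟩ ⟨0, h0K, hFD0⟩
    · exact le_csInf ⟨FD 0, Set.mem_image_of_mem FD h0K⟩
        (by rintro y ⟨x, _, rfl⟩; exact hFDnn x)
  -- FD w = 1/2 for w ∈ Wm
  have hFDw : ∀ w ∈ Wm m, FD w = 1/2 := by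
    intro w hw
    have hsum : ∑ V ∈ (Wm m).powerset, fV m V w = 2^(m-1) := by
      rw [Finset.sum_congr rfl fun V hV =>
        fV_eq_ite m hm (Finset.mem_powerset.mp hV) hw]
      have hins : Wm m = insert w ((Wm m).erase w) := (Finset.insert_erase hw).symm
      rw [hins, Finset.sum_powerset_insert (Finset.notMem_erase w _)]
      have h1 : ∑ t ∈ ((Wm m).erase w).powerset, (if w ∈ t then (1:ℝ) else 0) = 0 :=
        Finset.sum_eq_zero fun t ht => if_neg fun hwt =>
          Finset.notMem_erase w _ (Finset.mem_powerset.mp ht hwt)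
      have h2 : ∑ t ∈ ((Wm m).erase w).powerset,
          (if w ∈ insert w t then (1:ℝ) else 0) = 2^(m-1) := by
        rw [Finset.sum_congr rfl fun t _ => if_pos (Finset.mem_insert_self w t)]
        rw [Finset.sum_const, Finset.card_powerset, Finset.card_erase_of_mem hw, hWcard]
        simp
      rw [h1, h2, zero_add]
    rw [hFD]
    simp only
    rw [hsum, hPow]
    have hm1 : m - 1 + 1 = m := by omega
    have : ((2^m : ℕ) : ℝ) = 2^(m-1) * 2 := by
      rw [← hm1, pow_succ]; push_cast; ring
    rw [this]
    have h2m : (0:ℝ) < 2^(m-1) := by positivity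
    field_simp
  -- counting
  set P := Fintype.piFinset fun _ : Fin n => (Wm m).powerset with hP
  have hPcard : P.card = (2^m)^n := by
    rw [hP, Fintype.card_piFinset]
    simp [hPow]
  have hA : (P.filter (fun Vs => ∀ w ∈ Wm m, ∃ i, w ∈ Vs i)).card = (2^n - 1)^m := by
    rw [hP, cover_count n (Wm m), hWcard]
  have hsplit : (P.filter (fun Vs => ∀ w ∈ Wm m, ∃ i, w ∈ Vs i)).card
      + (P.filter fun Vs => ¬ ∀ w ∈ Wm m, ∃ i, w ∈ Vs i).card = P.card :=
    Finset.card_filter_add_card_filter_not _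
  -- the uncovered event implies the ERM-failure event
  have hsub : (P.filter fun Vs => ¬ ∀ w ∈ Wm m, ∃ i, w ∈ Vs i) ⊆
      P.filter (fun Vs => ∃ xhat ∈ K, (∀ y ∈ K, FS Vs xhat ≤ FS Vs y) ∧
        FD xhat - Fstar ≥ 1/2) := by
    intro Vs hVs
    rw [Finset.mem_filter] at hVs
    obtain ⟨hVsP, hnc⟩ := hVs
    push_neg at hnc
    obtain ⟨w, hw, hwV⟩ := hnc
    have hVsub : ∀ i, Vs i ⊆ Wm m := fun i =>
      Finset.mem_powerset.mp (Fintype.mem_piFinset.mp hVsP i)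
    refine Finset.mem_filter.mpr ⟨hVsP, w, hWK w hw, ?_, ?_⟩
    · intro y hy
      have hFSw : FS Vs w = 0 := by
        rw [hFS]
        simp only
        rw [Finset.sum_eq_zero fun i _ => ?_, zero_div]
        rw [fV_eq_ite m hm (hVsub i) hw, if_neg (hwV i)]
      rw [hFSw, hFS]
      exact div_nonneg (Finset.sum_nonneg fun i _ => fV_nonneg m hm (Vs i) y)
        (Nat.cast_nonneg _)
    · rw [hFDw w hw, hFstar0, sub_zero]
  -- numerics
  have hPc0 : (0:ℝ) < (P.card : ℝ) := by
    rw [hPcard]; positivity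
  have hcard_le : ((P.filter fun Vs => ¬ ∀ w ∈ Wm m, ∃ i, w ∈ Vs i).card : ℝ) ≤
      ((P.filter (fun Vs => ∃ xhat ∈ K, (∀ y ∈ K, FS Vs xhat ≤ FS Vs y) ∧
        FD xhat - Fstar ≥ 1/2)).card : ℝ) := by
    exact_mod_cast Finset.card_le_card hsub
  have hkm : (2:ℝ)^n ≤ m := by
    have h := Real.rpow_le_rpow_of_exponent_le (by norm_num : (1:ℝ) ≤ 2) hn
    rwa [Real.rpow_logb (by norm_num) (by norm_num) hm0, Real.rpow_natCast] at h
  have hratio : ((P.filter (fun Vs => ∀ w ∈ Wm m, ∃ i, w ∈ Vs i)).card : ℝ) / P.card < 1/2 := by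
    rw [hA, hPcard]
    have h1le : (1:ℕ) ≤ 2^n := Nat.one_le_two_pow
    have hcast : (((2^n - 1 : ℕ) : ℝ)) = 2^n - 1 := by
      push_cast [Nat.cast_sub h1le]; ring
    push_cast [hcast]
    have hswap : ((2:ℝ)^m)^n = ((2:ℝ)^n)^m := by
      rw [← pow_mul, ← pow_mul, Nat.mul_comm]
    rw [hswap]
    have hk0 : (0:ℝ) < 2^n := by positivity
    have hk1 : (1:ℝ) ≤ 2^n := one_le_pow₀ (by norm_num)
    rw [← div_pow]
    have heq : ((2:ℝ)^n - 1)/2^n = 1 - (2^n)⁻¹ := by field_simp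
    rw [heq]
    have hstep : (1 - ((2:ℝ)^n)⁻¹)^m ≤ Real.exp (-(2^n)⁻¹) ^ m := by
      apply pow_le_pow_left₀ (by rw [sub_nonneg, inv_le_one_iff₀]; right; exact hk1)
      linarith [Real.add_one_le_exp (-((2:ℝ)^n)⁻¹)]
    have hexp : Real.exp (-(2^n)⁻¹) ^ m = Real.exp (m * -((2:ℝ)^n)⁻¹) := by
      rw [← Real.exp_nat_mul]
    have hle : Real.exp (m * -((2:ℝ)^n)⁻¹) ≤ Real.exp (-1) := by
      apply Real.exp_le_exp.mpr
      have : (1:ℝ) ≤ m * (2^n)⁻¹ := by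
        rw [← div_eq_mul_inv, le_div_iff₀ hk0]; linarith
      nlinarith
    have hfin : Real.exp (-1) < 1/2 := by
      rw [Real.exp_neg]
      have h2e : (2:ℝ) < Real.exp 1 := lt_trans (by norm_num) Real.exp_one_gt_d9
      rw [inv_lt_comm₀ (by positivity) (by norm_num)]
      linarith
    calc (1 - ((2:ℝ)^n)⁻¹)^m ≤ Real.exp (-1) := by
          rw [hexp] at hstep; linarith [hstep.trans hle]
      _ < 1/2 := hfin
  have hGc : ((P.filter fun Vs => ¬ ∀ w ∈ Wm m, ∃ i, w ∈ Vs i).card : ℝ) =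
      (P.card : ℝ) - ((P.filter (fun Vs => ∀ w ∈ Wm m, ∃ i, w ∈ Vs i)).card : ℝ) := by
    have hc := congrArg (Nat.cast : ℕ → ℝ) hsplit
    push_cast at hc
    linarith
  have hfrac : ((P.filter fun Vs => ¬ ∀ w ∈ Wm m, ∃ i, w ∈ Vs i).card : ℝ) / P.card
      = 1 - ((P.filter (fun Vs => ∀ w ∈ Wm m, ∃ i, w ∈ Vs i)).card : ℝ) / P.card := by
    rw [hGc, sub_div, div_self (ne_of_gt hPc0)]
  calc (1:ℝ)/2
      < 1 - ((P.filter (fun Vs => ∀ w ∈ Wm m, ∃ i, w ∈ Vs i)).card : ℝ) / P.card := by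
        linarith
    _ = ((P.filter fun Vs => ¬ ∀ w ∈ Wm m, ∃ i, w ∈ Vs i).card : ℝ) / P.card := hfrac.symm
    _ ≤ _ := by gcongr
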